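/- The inclusion Ŝ^d(M,V) ⊆ S^d(M,V) can be strict: there exist a multicell domain M of the three-directional grid G, consisting of four triangles sharing a common vertex but containing pairs of triangles whose closures meet only in that vertex, such that for d = (0,1,0) and V = P₂ (bivariate polynomials of total degree ≤ 2), the strongly regular spline space Ŝ^{(0,1,0)}(M, P₂) is a proper subspace of the spline space with edge smoothness S^{(0,1,0)}(M, P₂). -/
import Mathlib


/- ## The three-directional (type-I) grid -/

noncomputable section

open MvPolynomial Set Function

/-- Points of the plane. -/
abbrev Pt := ℝ × ℝ

/-- Bivariate real polynomials `ℝ[x,y]`. -/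
abbrev BPoly := MvPolynomial (Fin 2) ℝ

/-- Evaluation of a bivariate polynomial at a point of the plane. -/
def evalP (q : BPoly) (p : Pt) : ℝ := MvPolynomial.eval ![p.1, p.2] q

/-- Triangles of the three-directional grid `G`:  `⟨v, false⟩` is the "lower"
triangle with vertices `v, v+(1,0), v+(1,1)`, and `⟨v, true⟩` is the "upper"
triangle with vertices `v, v+(0,1), v+(1,1)`. -/
structure Tri where
  v : ℤ × ℤ
  up : Bool
deriving DecidableEq

namespace Tri

/-- The open triangle in the plane realizing a combinatorial triangle. -/
def toSet (T : Tri) : Set Pt :=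
  if T.up then
    {p | (T.v.1 : ℝ) < p.1 ∧ p.1 - (T.v.1 : ℝ) < p.2 - (T.v.2 : ℝ) ∧ p.2 < (T.v.2 : ℝ) + 1}
  else
    {p | (T.v.2 : ℝ) < p.2 ∧ p.2 - (T.v.2 : ℝ) < p.1 - (T.v.1 : ℝ) ∧ p.1 < (T.v.1 : ℝ) + 1}

/-- The closed triangle. -/
def cl (T : Tri) : Set Pt := closure T.toSet

/-- The three lattice vertices of a triangle. -/
def vertices (T : Tri) : Finset (ℤ × ℤ) :=
  if T.up then {T.v, (T.v.1, T.v.2 + 1), (T.v.1 + 1, T.v.2 + 1)}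
  else {T.v, (T.v.1 + 1, T.v.2), (T.v.1 + 1, T.v.2 + 1)}

end Tri

/-- Edges of the grid: a lattice point together with a direction type
(`0 ↦ e₁ = (1,0)`, `1 ↦ e₂ = (0,1)`, `2 ↦ e₃ = (1,1)`); the edge of type `i`
at `v` joins `v` to `v + eᵢ`. -/
abbrev Edge := (ℤ × ℤ) × Fin 3

/-- The three direction vectors `e₁, e₂, e₃`. -/
def dirZ : Fin 3 → ℤ × ℤ := ![(1, 0), (0, 1), (1, 1)]

/-- The three edges of a triangle. -/
def Tri.edges (T : Tri) : Finset Edge :=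
  if T.up then {((T.v.1, T.v.2 + 1), 0), (T.v, 1), (T.v, 2)}
  else {(T.v, 0), ((T.v.1 + 1, T.v.2), 1), (T.v, 2)}

/-- The open segment realizing an edge. -/
def Edge.seg (ε : Edge) : Set Pt :=
  {p | ∃ t : ℝ, 0 < t ∧ t < 1 ∧
    p = ((ε.1.1 : ℝ) + t * ((dirZ ε.2).1 : ℝ), (ε.1.2 : ℝ) + t * ((dirZ ε.2).2 : ℝ))}

/-- `M*`: the union of the closed triangles of a multicell domain. -/
def Mstar (M : Finset Tri) : Set Pt := ⋃ T ∈ M, T.cl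

/-- `ℙ(M,V)`: continuous functions on `M*` whose restriction to each triangle
of `M` is the restriction of a polynomial in `V`. -/
def PP (M : Finset Tri) (V : Set BPoly) : Set (Pt → ℝ) :=
  {f | ContinuousOn f (Mstar M) ∧ ∀ T ∈ M, ∃ q ∈ V, EqOn f (evalP q) T.toSet}

/-- The diamond of an edge: union of the closed triangles of `M` having `ε`
as an edge. -/
def diamond (M : Finset Tri) (ε : Edge) : Set Pt :=
  ⋃ T ∈ M.filter (fun T => ε ∈ T.edges), T.cl

/-- The spline space with edge smoothness `d` on the multicell domain `M`:
piecewise polynomials (pieces from `V`) which are `C^{dᵢ}` on the diamond of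
every edge of type `i` of `M`. -/
def SplineSpace (M : Finset Tri) (V : Set BPoly) (d : Fin 3 → ℕ) : Set (Pt → ℝ) :=
  {f | f ∈ PP M V ∧
    ∀ ε : Edge, (∃ T ∈ M, ε ∈ T.edges) → ContDiffOn ℝ (d ε.2) f (diamond M ε)}

/-- Directional derivative of a polynomial along an integer vector. -/
def dirD (e : ℤ × ℤ) (q : BPoly) : BPoly :=
  (e.1 : ℝ) • MvPolynomial.pderiv (0 : Fin 2) q + (e.2 : ℝ) • MvPolynomial.pderiv (1 : Fin 2) q

/-- The mixed directional derivative operator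
`D_s = (∂_{e₁})^{s₁} (∂_{e₂})^{s₂} (∂_{e₃})^{s₃}`. -/
def Dmix (s : Fin 3 → ℕ) (q : BPoly) : BPoly :=
  (dirD (dirZ 0))^[s 0] ((dirD (dirZ 1))^[s 1] ((dirD (dirZ 2))^[s 2] q))

/-- The index sets `Iᵢ^d`; `I₁^d = {s | s₂+s₃ ≤ d₁}` and cyclically. -/
def Iset (d : Fin 3 → ℕ) (i : Fin 3) : Set (Fin 3 → ℕ) :=
  {s | s (i + 1) + s (i + 2) ≤ d i}

/-- Two triangles of the grid are adjacent if they are distinct and share an edge. -/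
def Adj (T T' : Tri) : Prop := T ≠ T' ∧ ∃ ε : Edge, ε ∈ T.edges ∧ ε ∈ T'.edges

/-- `c` is an edge-connected chain of length `m` from `T` to `T'`. -/
def TriIsChain (T T' : Tri) (m : ℕ) (c : ℕ → Tri) : Prop :=
  c 0 = T ∧ c m = T' ∧ ∀ k < m, Adj (c k) (c (k + 1))

/-- The set of types of the edges crossed by a chain. -/
def chainTypes (m : ℕ) (c : ℕ → Tri) : Set (Fin 3) :=
  {i | ∃ k < m, ∃ ε : Edge, ε.2 = i ∧ ε ∈ (c k).edges ∧ ε ∈ (c (k + 1)).edges}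

/-- Minimal length of an edge-connected chain between two triangles. -/
def minLen (T T' : Tri) : ℕ := sInf {m | ∃ c, TriIsChain T T' m c}

/-- The smoothness type `SmType(△,△')`: the types of the edges crossed by a
shortest edge-connected chain from `△` to `△'`. -/
def SmType (T T' : Tri) : Set (Fin 3) :=
  {i | ∃ c, TriIsChain T T' (minLen T T') c ∧ i ∈ chainTypes (minLen T T') c}

/-- `q` is the polynomial piece of `f` on the triangle `T`. -/
def IsPiece (f : Pt → ℝ) (T : Tri) (q : BPoly) : Prop := EqOn f (evalP q) T.toSet

/-- The strongly regular spline space `Ŝ^d(M,V)`: piecewise polynomials such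
that for any two triangles of `M` with intersecting closures, the derivatives
`D_s`, `s ∈ ⋂_{i ∈ SmType(△,△')} Iᵢ^d`, of the two polynomial pieces agree on the
intersection of the closures (i.e. `D_s f` is continuous there). -/
def StrongSpline (M : Finset Tri) (V : Set BPoly) (d : Fin 3 → ℕ) : Set (Pt → ℝ) :=
  {f | f ∈ PP M V ∧
    ∀ T ∈ M, ∀ T' ∈ M, (T.cl ∩ T'.cl).Nonempty →
      ∀ s : Fin 3 → ℕ, (∀ i ∈ SmType T T', s ∈ Iset d i) →
        ∀ q q' : BPoly, IsPiece f T q → IsPiece f T' q' →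
          ∀ x ∈ T.cl ∩ T'.cl, evalP (Dmix s q) x = evalP (Dmix s q') x}

/-- Kissing triangles: the closures intersect in exactly one point. -/
def Kissing (T T' : Tri) : Prop := ∃ p : Pt, T.cl ∩ T'.cl = {p}

/-- An over-concave vertex of `M`: exactly one triangle of `star(ν)` is
missing from `M`. -/
def OverConcave (M : Finset Tri) (ν : ℤ × ℤ) : Prop :=
  ∃! T : Tri, ν ∈ T.vertices ∧ T ∉ M

/- ## Type-I box splines -/

/-- The Courant hat function `B_{(1,1,1)}`: the piecewise linear function on
`G` supported on `star((1,1))` with value `1` at `(1,1)` and `0` at all other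
lattice points. -/
def hat (p : Pt) : ℝ :=
  max 0 (min (min (min p.1 p.2) (min (2 - p.1) (2 - p.2)))
             (min (1 - (p.1 - p.2)) (1 + (p.1 - p.2))))

/-- The type-I box spline `B_{(n₁,n₂,n₃)}`, defined by repeated directional
convolution starting from the Courant hat function (the result is independent
of the order of the convolutions); junk value `0` if some `nᵢ = 0`. -/
noncomputable def boxN : ℕ → ℕ → ℕ → Pt → ℝ
  | 0, _, _, _ => 0
  | _ + 1, 0, _, _ => 0
  | _ + 1, _ + 1, 0, _ => 0
  | 1, 1, 1, p => hat p
  | a + 2, b + 1, c + 1, p =>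
      ∫ t in (0:ℝ)..1, boxN (a + 1) (b + 1) (c + 1) (p.1 - t, p.2)
  | 1, b + 2, c + 1, p =>
      ∫ t in (0:ℝ)..1, boxN 1 (b + 1) (c + 1) (p.1, p.2 - t)
  | 1, 1, c + 2, p =>
      ∫ t in (0:ℝ)..1, boxN 1 1 (c + 1) (p.1 - t, p.2 - t)
  termination_by a b c _ => a + b + c
  decreasing_by all_goals omega

/-- The translate `B_n(· - w)` of the box spline. -/
def trBox (n₁ n₂ n₃ : ℕ) (w : ℤ × ℤ) (p : Pt) : ℝ :=
  boxN n₁ n₂ n₃ (p.1 - (w.1 : ℝ), p.2 - (w.2 : ℝ))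

/-- `Supp_n(△̂)`: lattice translates of `B_n` that do not vanish identically
on the triangle `T`. -/
def activeSet (n₁ n₂ n₃ : ℕ) (T : Tri) : Set (ℤ × ℤ) :=
  {w | ¬ ∀ p ∈ T.toSet, trBox n₁ n₂ n₃ w p = 0}

/-- `c` is the coefficient vector of the polynomial `q` with respect to the
active box-spline translates on `T`:  `q|_T = Σ_β λ_T^β(q)·β|_T`. -/
def Represents (n₁ n₂ n₃ : ℕ) (T : Tri) (q : BPoly) (c : (ℤ × ℤ) →₀ ℝ) : Prop :=
  ↑c.support ⊆ activeSet n₁ n₂ n₃ T ∧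
    ∀ p ∈ T.toSet, evalP q p = c.sum fun w a => a * trBox n₁ n₂ n₃ w p

/-- `V_n` (relative to the triangle `T`): polynomials whose restriction to `T`
is a linear combination of the active box-spline translates on `T`. -/
def VSpace (n₁ n₂ n₃ : ℕ) (T : Tri) : Set BPoly :=
  {q | ∃ c, Represents n₁ n₂ n₃ T q c}



def TA : Tri := ⟨(0,0), false⟩
def TB : Tri := ⟨(0,0), true⟩
def TD : Tri := ⟨(-1,-1), true⟩
def TE : Tri := ⟨(-1,-1), false⟩
def TF : Tri := ⟨(0,-1), true⟩
def MM : Finset Tri := {TA, TB, TD, TE}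

example : MM.card = 4 := by decide
example : ∀ T ∈ MM, ((0,0) : ℤ×ℤ) ∈ T.vertices := by decide
example : (((0,0),0) : Edge) ∈ TA.edges := by decide
example : TF ∉ MM := by decide

lemma mem_edges_inv (T : Tri) (w : ℤ×ℤ) (i : Fin 3) (h : ((w,i) : Edge) ∈ T.edges) :
    (i = 0 ∧ (T = ⟨(w.1, w.2-1), true⟩ ∨ T = ⟨w, false⟩)) ∨
    (i = 1 ∧ (T = ⟨w, true⟩ ∨ T = ⟨(w.1-1, w.2), false⟩)) ∨
    (i = 2 ∧ (T = ⟨w, true⟩ ∨ T = ⟨w, false⟩)) := by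
  rcases T with ⟨⟨a,b⟩, u⟩
  cases u <;> simp [Tri.edges, Prod.ext_iff, Tri.mk.injEq] at h ⊢ <;>
    rcases h with h|h|h <;> simp_all [Prod.ext_iff] <;> omega
lemma cl_lower_subset (a b : ℤ) : (Tri.mk (a,b) false).cl ⊆
    {p : Pt | (b:ℝ) ≤ p.2 ∧ p.2 - b ≤ p.1 - a ∧ p.1 ≤ a+1} := by
  apply closure_minimal
  · intro p hp
    simp only [Tri.toSet, Bool.false_eq_true, if_false, Set.mem_setOf_eq] at hp
    exact ⟨hp.1.le, hp.2.1.le, hp.2.2.le⟩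
  · simp only [Set.setOf_and]
    exact (isClosed_le continuous_const continuous_snd).inter
      ((isClosed_le (continuous_snd.sub continuous_const) (continuous_fst.sub continuous_const)).inter
        (isClosed_le continuous_fst continuous_const))

lemma cl_upper_subset (a b : ℤ) : (Tri.mk (a,b) true).cl ⊆
    {p : Pt | (a:ℝ) ≤ p.1 ∧ p.1 - a ≤ p.2 - b ∧ p.2 ≤ b+1} := by
  apply closure_minimal
  · intro p hp
    simp only [Tri.toSet, if_true, Set.mem_setOf_eq] at hp
    exact ⟨hp.1.le, hp.2.1.le, hp.2.2.le⟩
  · simp only [Set.setOf_and]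
    exact (isClosed_le continuous_const continuous_fst).inter
      ((isClosed_le (continuous_fst.sub continuous_const) (continuous_snd.sub continuous_const)).inter
        (isClosed_le continuous_snd continuous_const))

lemma origin_mem_clA : ((0,0):Pt) ∈ Tri.cl ⟨(0,0), false⟩ := by
  rw [Tri.cl, Metric.mem_closure_iff]
  intro ε hε
  obtain ⟨t, ht0, ht1, ht2⟩ : ∃ t : ℝ, 0 < t ∧ t ≤ ε/4 ∧ t ≤ 1/4 :=
    ⟨min (ε/4) (1/4), lt_min (by linarith) (by norm_num), min_le_left _ _, min_le_right _ _⟩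
  refine ⟨(2*t, t), ?_, ?_⟩
  · simp only [Tri.toSet, Bool.false_eq_true, if_false, Set.mem_setOf_eq]
    push_cast
    refine ⟨by linarith, by linarith, by linarith⟩
  · rw [Prod.dist_eq]
    simp only [Real.dist_eq]
    rw [max_lt_iff]
    constructor <;> rw [abs_sub_lt_iff] <;> constructor <;> linarith

lemma origin_mem_clE : ((0,0):Pt) ∈ Tri.cl ⟨(-1,-1), false⟩ := by
  rw [Tri.cl, Metric.mem_closure_iff]
  intro ε hε
  obtain ⟨t, ht0, ht1, ht2⟩ : ∃ t : ℝ, 0 < t ∧ t ≤ ε/4 ∧ t ≤ 1/4 :=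
    ⟨min (ε/4) (1/4), lt_min (by linarith) (by norm_num), min_le_left _ _, min_le_right _ _⟩
  refine ⟨(-t, -2*t), ?_, ?_⟩
  · simp only [Tri.toSet, Bool.false_eq_true, if_false, Set.mem_setOf_eq]
    push_cast
    refine ⟨by linarith, by linarith, by linarith⟩
  · rw [Prod.dist_eq]
    simp only [Real.dist_eq]
    rw [max_lt_iff]
    constructor <;> rw [abs_sub_lt_iff] <;> constructor <;> linarith
lemma kiss_AE : Kissing TA TE := by
  refine ⟨(0,0), Set.eq_singleton_iff_unique_mem.mpr ⟨⟨origin_mem_clA, origin_mem_clE⟩, ?_⟩⟩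
  rintro ⟨x, y⟩ ⟨hA, hE⟩
  have h1 := cl_lower_subset 0 0 hA
  have h2 := cl_lower_subset (-1) (-1) hE
  simp only [Set.mem_setOf_eq] at h1 h2
  push_cast at h1 h2
  have hx : x = 0 := le_antisymm (by linarith [h2.2.2]) (by linarith [h1.1, h1.2.1])
  have hy : y = 0 := le_antisymm (by linarith [h1.2.1, h2.2.2]) (by linarith [h1.1])
  simp [hx, hy]

lemma contDiff_evalP (q : BPoly) : ContDiff ℝ (⊤ : ℕ∞) (evalP q) := by
  induction q using MvPolynomial.induction_on with
  | C a =>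
      have : evalP (C a : BPoly) = fun _ => a := by funext p; simp [evalP]
      rw [this]; exact contDiff_const
  | add p q hp hq =>
      have : evalP (p + q) = fun x => evalP p x + evalP q x := by funext x; simp [evalP]
      rw [this]; exact hp.add hq
  | mul_X p i hp =>
      have : evalP (p * X i) = fun x => evalP p x * ![x.1, x.2] i := by
        funext x; simp [evalP]
      rw [this]
      refine hp.mul ?_
      fin_cases i
      · simpa using contDiff_fst
      · simpa using contDiff_snd

lemma cl_sub_Mstar {M : Finset Tri} {T : Tri} (hT : T ∈ M) : T.cl ⊆ Mstar M :=
  fun x hx => Set.mem_biUnion hT hx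

lemma diamond_sub_Mstar (M : Finset Tri) (ε : Edge) : diamond M ε ⊆ Mstar M := by
  intro x hx
  simp only [diamond, Set.mem_iUnion, Finset.mem_filter] at hx
  obtain ⟨T, ⟨hTM, _⟩, hx⟩ := hx
  exact Set.mem_biUnion hTM hx

lemma piece_cl {g : Pt → ℝ} {M : Finset Tri} {q : BPoly} {T : Tri}
    (hg : ContinuousOn g (Mstar M)) (hT : T ∈ M) (h : Set.EqOn g (evalP q) T.toSet) :
    Set.EqOn g (evalP q) T.cl :=
  h.of_subset_closure (hg.mono (cl_sub_Mstar hT)) (contDiff_evalP q).continuous.continuousOn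
    subset_closure Set.Subset.rfl

lemma diamond_subset_cl {M : Finset Tri} {ε : Edge} {T₀ : Tri}
    (h : ∀ T' ∈ M, ε ∈ T'.edges → T' = T₀) : diamond M ε ⊆ T₀.cl := by
  intro x hx
  simp only [diamond, Set.mem_iUnion, Finset.mem_filter] at hx
  obtain ⟨T', ⟨hT'M, hT'ε⟩, hx⟩ := hx
  rwa [h T' hT'M hT'ε] at hx

lemma type1_smooth {V : Set BPoly} {g : Pt → ℝ} (hg : g ∈ PP MM V) {T₀ : Tri} (hT₀ : T₀ ∈ MM)
    {ε : Edge} (h : ∀ T' ∈ MM, ε ∈ T'.edges → T' = T₀) (n : ℕ∞) :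
    ContDiffOn ℝ n g (diamond MM ε) := by
  obtain ⟨q, -, hq⟩ := hg.2 T₀ hT₀
  have hEq : Set.EqOn g (evalP q) T₀.cl := piece_cl hg.1 hT₀ hq
  exact (((contDiff_evalP q).of_le (mod_cast le_top)).contDiffOn.congr hEq).mono (diamond_subset_cl h)
lemma PP_sub_Spline {V : Set BPoly} : PP MM V ⊆ SplineSpace MM V ![0,1,0] := by
  intro g hg
  refine ⟨hg, ?_⟩
  rintro ⟨w, i⟩ ⟨T, hT, hTε⟩
  fin_cases i
  · exact contDiffOn_zero.mpr (hg.1.mono (diamond_sub_Mstar MM _))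
  · have h4 : (w = ((1:ℤ),(0:ℤ)) ∧ T = TA) ∨ (w = (0,0) ∧ T = TB) ∨
        (w = (-1,-1) ∧ T = TD) ∨ (w = (0,-1) ∧ T = TE) := by
      fin_cases hT <;> simp [TA, TB, TD, TE, Tri.edges, Prod.ext_iff] at hTε ⊢ <;> omega
    rcases h4 with ⟨rfl, rfl⟩|⟨rfl, rfl⟩|⟨rfl, rfl⟩|⟨rfl, rfl⟩
    · exact type1_smooth (T₀ := TA) hg (by decide) (by decide) _
    · exact type1_smooth (T₀ := TB) hg (by decide) (by decide) _
    · exact type1_smooth (T₀ := TD) hg (by decide) (by decide) _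
    · exact type1_smooth (T₀ := TE) hg (by decide) (by decide) _
  · exact contDiffOn_zero.mpr (hg.1.mono (diamond_sub_Mstar MM _))
def ff : Pt → ℝ := fun p => min p.1 0

lemma ffA : Set.EqOn ff (evalP 0) TA.toSet := by
  intro p hp
  simp only [TA, Tri.toSet, Bool.false_eq_true, if_false, Set.mem_setOf_eq] at hp
  push_cast at hp
  simp only [ff, evalP, map_zero]
  exact min_eq_right (by linarith [hp.1, hp.2.1])

lemma ffB : Set.EqOn ff (evalP 0) TB.toSet := by
  intro p hp
  simp only [TB, Tri.toSet, if_true, Set.mem_setOf_eq] at hp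
  push_cast at hp
  simp only [ff, evalP, map_zero]
  exact min_eq_right (by linarith [hp.1])

lemma evalP_X0 (p : Pt) : evalP (X 0) p = p.1 := by simp [evalP]

lemma ffD : Set.EqOn ff (evalP (X 0)) TD.toSet := by
  intro p hp
  simp only [TD, Tri.toSet, if_true, Set.mem_setOf_eq] at hp
  push_cast at hp
  rw [evalP_X0]
  exact min_eq_left (by linarith [hp.2.1, hp.2.2])

lemma ffE : Set.EqOn ff (evalP (X 0)) TE.toSet := by
  intro p hp
  simp only [TE, Tri.toSet, Bool.false_eq_true, if_false, Set.mem_setOf_eq] at hp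
  push_cast at hp
  rw [evalP_X0]
  exact min_eq_left (by linarith [hp.2.2])

lemma ff_PP : ff ∈ PP MM {q : BPoly | q.totalDegree ≤ 2} := by
  refine ⟨(continuous_fst.min continuous_const).continuousOn, ?_⟩
  intro T hT
  fin_cases hT
  · exact ⟨0, by simp, ffA⟩
  · exact ⟨0, by simp, ffB⟩
  · exact ⟨X 0, by simp [MvPolynomial.totalDegree_X], ffD⟩
  · exact ⟨X 0, by simp [MvPolynomial.totalDegree_X], ffE⟩
def cc : ℕ → Tri := fun k => if k = 0 then TA else if k = 1 then TF else TE

lemma chain_AFE : TriIsChain TA TE 2 cc := by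
  refine ⟨rfl, rfl, ?_⟩
  intro k hk
  interval_cases k
  · exact ⟨by decide, (((0:ℤ),(0:ℤ)), (0:Fin 3)), by decide, by decide⟩
  · exact ⟨by decide, (((0:ℤ),(-1:ℤ)), (1:Fin 3)), by decide, by decide⟩

lemma minLen_AE : minLen TA TE = 2 := by
  apply le_antisymm
  · exact Nat.sInf_le ⟨cc, chain_AFE⟩
  · unfold minLen
    refine le_csInf ⟨2, cc, chain_AFE⟩ ?_
    rintro m ⟨c, hc0, hcm, hadj⟩
    by_contra h
    push_neg at h
    interval_cases m
    · rw [hc0] at hcm; exact absurd hcm (by decide)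
    · obtain ⟨-, ε, hA, hE⟩ := hadj 0 (by norm_num)
      rw [hc0] at hA
      rw [hcm] at hE
      fin_cases hA <;> exact absurd hE (by decide)

lemma not_two_SmType : (2 : Fin 3) ∉ SmType TA TE := by
  rintro ⟨c, ⟨hc0, hcm, hadj⟩, hct⟩
  rw [minLen_AE] at hcm hct hadj
  obtain ⟨hne, ε₀, h₀A, h₀c⟩ := hadj 0 (by norm_num)
  rw [hc0] at h₀A hne
  have hc1 : c 1 = TF := by
    fin_cases h₀A
    · rcases mem_edges_inv _ _ _ h₀c with ⟨_, h⟩|⟨h, _⟩|⟨h, _⟩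
      · rcases h with h|h
        · rw [h]; decide
        · exact absurd h.symm hne
      · exact absurd h (by decide)
      · exact absurd h (by decide)
    · rcases mem_edges_inv _ _ _ h₀c with ⟨h, _⟩|⟨_, h⟩|⟨h, _⟩
      · exact absurd h (by decide)
      · -- c 1 = ⟨(1,0),true⟩ or TA; both lead to contradiction via Adj (c 1) (c 2)
        exfalso
        obtain ⟨hne1, ε₁, h₁, h₂⟩ := hadj 1 (by norm_num)
        rw [hcm] at h₂
        rcases h with h|h
        · rw [h] at h₁; fin_cases h₁ <;> exact absurd h₂ (by decide)
        · rw [h] at h₁; fin_cases h₁ <;> exact absurd h₂ (by decide)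
      · exact absurd h (by decide)
    · rcases mem_edges_inv _ _ _ h₀c with ⟨h, _⟩|⟨h, _⟩|⟨_, h⟩
      · exact absurd h (by decide)
      · exact absurd h (by decide)
      · exfalso
        obtain ⟨hne1, ε₁, h₁, h₂⟩ := hadj 1 (by norm_num)
        rw [hcm] at h₂
        rcases h with h|h
        · rw [h] at h₁; fin_cases h₁ <;> exact absurd h₂ (by decide)
        · rw [h] at h₁; fin_cases h₁ <;> exact absurd h₂ (by decide)
  obtain ⟨k, hk, ε, hε2, hεk, hεk1⟩ := hct
  interval_cases k
  · rw [hc0] at hεk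
    rw [hc1] at hεk1
    fin_cases hεk <;> simp_all <;> exact absurd hεk1 (by decide)
  · rw [hc1] at hεk
    rw [hcm] at hεk1
    fin_cases hεk <;> simp_all <;> exact absurd hεk1 (by decide)
lemma ff_not_Strong :
    ff ∉ StrongSpline MM {q : BPoly | q.totalDegree ≤ 2} ![0, 1, 0] := by
  intro h
  have hs : ∀ i ∈ SmType TA TE, ![1,0,0] ∈ Iset ![0,1,0] i := by
    intro i hi
    fin_cases i
    · show ![1,0,0] (0+1) + ![1,0,0] (0+2) ≤ ![0,1,0] 0
      decide
    · show ![1,0,0] (1+1) + ![1,0,0] (1+2) ≤ ![0,1,0] 1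
      decide
    · exact absurd hi not_two_SmType
  have key := h.2 TA (by decide) TE (by decide) ⟨(0,0), origin_mem_clA, origin_mem_clE⟩
    ![1,0,0] hs 0 (X 0) ffA ffE (0,0) ⟨origin_mem_clA, origin_mem_clE⟩
  simp only [Dmix, dirZ, Matrix.cons_val_zero, Matrix.cons_val_one, Matrix.head_cons,
    Matrix.cons_val_two, Matrix.tail_cons, Function.iterate_zero, Function.iterate_one,
    id_eq, dirD] at key
  norm_num [evalP, MvPolynomial.pderiv_X_self] at key

/-- The inclusion `Ŝ^d(M,V) ⊆ S^d(M,V)` can be strict: there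
is a multicell domain `M` of four triangles sharing a common vertex,
containing a pair of kissing triangles, such that for `d = (0,1,0)` and
`V = P₂` the strongly regular splines form a proper subspace of the splines
with edge smoothness `d`. -/
theorem statement17 :
    ∃ M : Finset Tri, M.card = 4 ∧
      (∃ ν : ℤ × ℤ, ∀ T ∈ M, ν ∈ T.vertices) ∧
      (∃ T ∈ M, ∃ T' ∈ M, Kissing T T') ∧
      StrongSpline M {q : BPoly | q.totalDegree ≤ 2} ![0, 1, 0] ⊂
        SplineSpace M {q : BPoly | q.totalDegree ≤ 2} ![0, 1, 0] := by
  refine ⟨MM, by decide, ⟨(0,0), by decide⟩, ⟨TA, by decide, TE, by decide, kiss_AE⟩, ?_⟩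
  rw [Set.ssubset_iff_of_subset (fun g hg => PP_sub_Spline hg.1)]
  exact ⟨ff, PP_sub_Spline ff_PP, ff_not_Strong⟩

end
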